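/- arXiv:2210.08454 — 6 statements merged into one kernel-verified Lean document; each statement's English description precedes it below -/
import Mathlib

section
/- Let N ≥ 1 and let E : Fin N → ℝ satisfy E 0 < E i for all i ≠ 0 and E i ≤ E (N-1) for all i (so E (N-1) is the largest value). Let μ > 0 and assume that if E (N-1) + E 0 > 0 then μ < 1/(E (N-1) + E 0). Then for every i ≠ 0 one has |1 - 2μ·(E i)| < |1 - 2μ·(E 0)|. -/
/-- Theorem 1 (eigenvalue form): if `E 0` is the strictly smallest and `E (N-1)` the
largest eigenvalue, `μ > 0`, and `μ < 1/(E (N-1) + E 0)` whenever `E (N-1) + E 0 > 0`,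
then `|1 - 2μ E i| < |1 - 2μ E 0|` for all `i ≠ 0`. -/
theorem stmt_1 (n : ℕ) (E : Fin (n + 1) → ℝ)
    (hE0 : ∀ i : Fin (n + 1), i ≠ 0 → E 0 < E i)
    (hEtop : ∀ i : Fin (n + 1), E i ≤ E (Fin.last n))
    (μ : ℝ) (hμ : 0 < μ)
    (hμ' : E (Fin.last n) + E 0 > 0 → μ < 1 / (E (Fin.last n) + E 0)) :
    ∀ i : Fin (n + 1), i ≠ 0 → |1 - 2 * μ * E i| < |1 - 2 * μ * E 0| := by
  intro i hi
  have h1 : E 0 < E i := hE0 i hi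
  have h2 : E i ≤ E (Fin.last n) := hEtop i
  -- key: μ * (E i + E 0) < 1
  have hkey : μ * (E i + E 0) < 1 := by
    rcases le_or_gt (E i + E 0) 0 with h | h
    · nlinarith
    · have hL : E (Fin.last n) + E 0 > 0 := by linarith
      have := hμ' hL
      have hpos : 0 < E (Fin.last n) + E 0 := hL
      have hlt : μ * (E (Fin.last n) + E 0) < 1 := by
        have := mul_lt_mul_of_pos_right (hμ' hL) hpos
        rwa [one_div, inv_mul_cancel₀ (ne_of_gt hpos)] at this
      nlinarith
  have hd1 : 0 < 2 * μ * (E i - E 0) := by nlinarith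
  have hd2 : 0 < 2 - 2 * μ * (E i + E 0) := by nlinarith
  have hsq : (1 - 2 * μ * E i) ^ 2 < (1 - 2 * μ * E 0) ^ 2 := by nlinarith [mul_pos hd1 hd2]
  have := abs_nonneg (1 - 2 * μ * E i)
  have := abs_nonneg (1 - 2 * μ * E 0)
  nlinarith [sq_abs (1 - 2 * μ * E i), sq_abs (1 - 2 * μ * E 0)]
end

section
/- Let N ≥ 1, let u : Fin N → EuclideanSpace ℂ (Fin N) be an orthonormal basis, let E : Fin N → ℝ with E 0 < E i for all i ≠ 0 and E i ≤ E (N-1) for all i, and let T be the self-adjoint linear operator defined by T (u i) = (E i) • (u i). Let μ > 0 with μ < 1/(E (N-1) + E 0) whenever E (N-1) + E 0 > 0, and set G = id - (2μ) • T. Let φ₀ be a unit vector with ⟪u 0, φ₀⟫ ≠ 0. Then ‖⟪u 0, G^s φ₀⟫‖ / ‖G^s φ₀‖ tends to 1 as s → ∞. -/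
/-!
On the eigenbasis `u i` the operator `G = 1 - 2μT` acts diagonally with eigenvalues
`g i = 1 - 2μ E i`, and the learning-rate condition makes `g 0` strictly dominant:
`|g i| < g 0` for `i ≠ 0`. Hence `(g 0)^(-s) • G^s φ₀ → ⟪u 0, φ₀⟫ • u 0 ≠ 0`; the fidelity is
invariant under rescaling and continuous away from `0`, so it converges to its value at
`u 0`, which is `1`.
-/

open Filter Topology

section PowerIteration

variable {𝕜 E ι : Type*} [NormedField 𝕜] [NormedAddCommGroup E] [NormedSpace 𝕜 E]

theorem LinearMap.pow_apply_eq_pow_smul {G : E →ₗ[𝕜] E} {a : 𝕜} {v : E} (hv : G v = a • v)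
    (s : ℕ) : (G ^ s) v = a ^ s • v := by
  induction s with
  | zero => simp
  | succ s ih => rw [pow_succ', Module.End.mul_apply, ih, map_smul, hv, smul_smul, pow_succ]

theorem tendsto_inv_pow_smul_pow_apply_sum [Fintype ι] [DecidableEq ι] {G : E →ₗ[𝕜] E}
    {u : ι → E} {a : ι → 𝕜} (hG : ∀ i, G (u i) = a i • u i) (c : ι → 𝕜) {i₀ : ι}
    (ha₀ : a i₀ ≠ 0) (hdom : ∀ i, i ≠ i₀ → ‖a i‖ < ‖a i₀‖) :
    Tendsto (fun s : ℕ => (a i₀ ^ s)⁻¹ • (G ^ s) (∑ i, c i • u i)) atTop (𝓝 (c i₀ • u i₀)) := by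
  have hterm : ∀ i, Tendsto (fun s : ℕ => ((a i / a i₀) ^ s * c i) • u i) atTop
      (𝓝 (if i = i₀ then c i₀ • u i₀ else 0)) := by
    intro i
    split_ifs with hi
    · subst hi
      simp [div_self ha₀]
    · have hratio : ‖a i / a i₀‖ < 1 := by
        rw [norm_div, div_lt_one (norm_pos_iff.mpr ha₀)]
        exact hdom i hi
      simpa using ((tendsto_pow_atTop_nhds_zero_of_norm_lt_one hratio).mul_const (c i)).smul_const
        (u i)
  have hsum := tendsto_finsetSum Finset.univ fun i _ => hterm i
  rw [Finset.sum_ite_eq', if_pos (Finset.mem_univ _)] at hsum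
  refine hsum.congr fun s => ?_
  simp only [map_sum, map_smul, LinearMap.pow_apply_eq_pow_smul (hG _), Finset.smul_sum,
    smul_smul, div_pow]
  refine Finset.sum_congr rfl fun i _ => ?_
  ring_nf

end PowerIteration

section Fidelity

variable (𝕜 : Type*) {E : Type*} [RCLike 𝕜] [NormedAddCommGroup E] [InnerProductSpace 𝕜 E]

noncomputable def fidelity (u w : E) : ℝ :=
  ‖(inner 𝕜 u w : 𝕜)‖ / ‖w‖

variable {𝕜}

theorem fidelity_smul_right (u : E) {c : 𝕜} (hc : c ≠ 0) (w : E) :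
    fidelity 𝕜 u (c • w) = fidelity 𝕜 u w := by
  simp only [fidelity, inner_smul_right, norm_smul, norm_mul]
  exact mul_div_mul_left _ _ (norm_ne_zero_iff.mpr hc)

theorem fidelity_self_of_norm_eq_one {u : E} (hu : ‖u‖ = 1) : fidelity 𝕜 u u = 1 := by
  simp [fidelity, inner_self_eq_norm_sq_to_K, hu]

theorem continuousAt_fidelity (u : E) {w : E} (hw : w ≠ 0) :
    ContinuousAt (fidelity 𝕜 u) w :=
  ((continuous_const.inner continuous_id).norm.continuousAt).div continuous_norm.continuousAt
    (norm_ne_zero_iff.mpr hw)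

end Fidelity

theorem Orthonormal.sum_inner_smul_eq {𝕜 E ι : Type*} [RCLike 𝕜] [NormedAddCommGroup E]
    [InnerProductSpace 𝕜 E] [Fintype ι] [Nonempty ι] {u : ι → E} (hu : Orthonormal 𝕜 u)
    (hcard : Fintype.card ι = Module.finrank 𝕜 E) (x : E) :
    ∑ i, (inner 𝕜 (u i) x : 𝕜) • u i = x := by
  let b := basisOfLinearIndependentOfCardEqFinrank hu.linearIndependent hcard
  have hb : ⇑b = u := coe_basisOfLinearIndependentOfCardEqFinrank _ _
  simpa [hb] using (b.toOrthonormalBasis (hb ▸ hu)).sum_repr' x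

theorem abs_one_sub_two_mul_lt {μ a b : ℝ} (hμ : 0 < μ) (hab : a < b) (h : μ * (b + a) < 1) :
    |1 - 2 * μ * b| < 1 - 2 * μ * a := by
  rw [abs_lt]
  constructor <;> nlinarith

theorem mul_add_lt_one_of_le {μ x m e : ℝ} (hμ : 0 ≤ μ) (hx : x ≤ m)
    (h : m + e > 0 → μ < 1 / (m + e)) : μ * (x + e) < 1 := by
  rcases le_or_gt (m + e) 0 with hme | hme
  · nlinarith
  · have := (lt_div_iff₀ hme).mp (h hme)
    nlinarith

theorem stmt_2_general (n : ℕ)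
    (u : Fin (n + 1) → EuclideanSpace ℂ (Fin (n + 1)))
    (hu : Orthonormal ℂ u)
    (E : Fin (n + 1) → ℝ)
    (hE0 : ∀ i : Fin (n + 1), i ≠ 0 → E 0 < E i)
    (hEtop : ∀ i : Fin (n + 1), E i ≤ E (Fin.last n))
    (T : EuclideanSpace ℂ (Fin (n + 1)) →ₗ[ℂ] EuclideanSpace ℂ (Fin (n + 1)))
    (hT : ∀ i, T (u i) = (E i : ℂ) • u i)
    (μ : ℝ) (hμ : 0 < μ)
    (hμ' : E (Fin.last n) + E 0 > 0 → μ < 1 / (E (Fin.last n) + E 0))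
    (G : EuclideanSpace ℂ (Fin (n + 1)) →ₗ[ℂ] EuclideanSpace ℂ (Fin (n + 1)))
    (hG : G = LinearMap.id - ((2 * μ : ℝ) : ℂ) • T)
    (φ₀ : EuclideanSpace ℂ (Fin (n + 1)))
    (hover : (inner ℂ (u 0) φ₀ : ℂ) ≠ 0) :
    Tendsto (fun s : ℕ => ‖(inner ℂ (u 0) ((G ^ s) φ₀) : ℂ)‖ / ‖(G ^ s) φ₀‖)
      atTop (nhds 1) := by
  set g : Fin (n + 1) → ℝ := fun i => 1 - 2 * μ * E i
  have hrate : ∀ i, μ * (E i + E 0) < 1 := fun i => mul_add_lt_one_of_le hμ.le (hEtop i) hμ'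
  have hg0 : 0 < g 0 := by
    simp only [g]
    linarith [hrate 0]
  have hdom : ∀ i, i ≠ 0 → ‖(g i : ℂ)‖ < ‖(g 0 : ℂ)‖ := fun i hi => by
    simpa only [Complex.norm_real, Real.norm_eq_abs, abs_of_pos hg0] using
      abs_one_sub_two_mul_lt hμ (hE0 i hi) (hrate i)
  have hGu : ∀ i, G (u i) = (g i : ℂ) • u i := fun i => by
    simp only [hG, LinearMap.sub_apply, LinearMap.id_apply, LinearMap.smul_apply, hT, smul_smul, g]
    push_cast
    rw [sub_smul, one_smul]
  have hg0' : (g 0 : ℂ) ≠ 0 := Complex.ofReal_ne_zero.mpr hg0.ne'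
  have hlim := tendsto_inv_pow_smul_pow_apply_sum hGu (fun i => inner ℂ (u i) φ₀) hg0' hdom
  rw [hu.sum_inner_smul_eq (by simp) φ₀] at hlim
  have hfid := (continuousAt_fidelity (𝕜 := ℂ) (u 0)
    (smul_ne_zero hover (hu.ne_zero 0))).tendsto.comp hlim
  rw [Function.comp_def, fidelity_smul_right _ hover, fidelity_self_of_norm_eq_one (hu.1 0)] at hfid
  exact hfid.congr fun s => fidelity_smul_right _ (inv_ne_zero (pow_ne_zero _ hg0')) _

/-- Theorem 1 (convergence form): the normalized iterates `G^s φ₀ / ‖G^s φ₀‖` of the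
gradient operator `G = id - 2μ T` converge to the ground state, i.e. the fidelity with
`u 0` tends to `1`. -/
theorem stmt_2 (n : ℕ)
    (u : Fin (n + 1) → EuclideanSpace ℂ (Fin (n + 1)))
    (hu : Orthonormal ℂ u)
    (E : Fin (n + 1) → ℝ)
    (hE0 : ∀ i : Fin (n + 1), i ≠ 0 → E 0 < E i)
    (hEtop : ∀ i : Fin (n + 1), E i ≤ E (Fin.last n))
    (T : EuclideanSpace ℂ (Fin (n + 1)) →ₗ[ℂ] EuclideanSpace ℂ (Fin (n + 1)))
    (hTsa : T.IsSymmetric)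
    (hT : ∀ i, T (u i) = (E i : ℂ) • u i)
    (μ : ℝ) (hμ : 0 < μ)
    (hμ' : E (Fin.last n) + E 0 > 0 → μ < 1 / (E (Fin.last n) + E 0))
    (G : EuclideanSpace ℂ (Fin (n + 1)) →ₗ[ℂ] EuclideanSpace ℂ (Fin (n + 1)))
    (hG : G = LinearMap.id - ((2 * μ : ℝ) : ℂ) • T)
    (φ₀ : EuclideanSpace ℂ (Fin (n + 1))) (hφ₀ : ‖φ₀‖ = 1)
    (hover : (inner ℂ (u 0) φ₀ : ℂ) ≠ 0) :
    Tendsto (fun s : ℕ => ‖(inner ℂ (u 0) ((G ^ s) φ₀) : ℂ)‖ / ‖(G ^ s) φ₀‖)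
      atTop (nhds 1) :=
  stmt_2_general n u hu E hE0 hEtop T hT μ hμ hμ' G hG φ₀ hover
end

section
/- Let G be an N×N complex Hermitian matrix, let φ₀ ∈ ℂ^N, let 𝒩 > 0, and suppose G^(s+1) applied to φ₀ is nonzero for all s. Define the normalized iterates φ(s) = G^s φ₀ / ‖G^s φ₀‖ and the success probabilities P(s+1) = ‖G φ(s)‖² / 𝒩². Then P is nondecreasing: P(s+1) ≤ P(s+2) for all s ≥ 0. -/
/-!
With `v s = G ^ s φ₀`, the probability is `P (s + 1) = (‖v (s + 1)‖ / ‖v s‖) ^ 2 / 𝒩 ^ 2`.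
For Hermitian `G`, `‖G v‖ ^ 2 = ⟪v, G (G v)⟫ ≤ ‖v‖ * ‖G (G v)‖` by Cauchy–Schwarz, so the ratio
`‖G v‖ / ‖v‖` can only grow when `v` is replaced by `G v`.
-/

open scoped InnerProductSpace

namespace LinearMap.IsSymmetric

variable {𝕜 E : Type*} [RCLike 𝕜] [NormedAddCommGroup E] [InnerProductSpace 𝕜 E]
  {T : E →ₗ[𝕜] E}

theorem norm_apply_sq_le (hT : T.IsSymmetric) (v : E) : ‖T v‖ ^ 2 ≤ ‖v‖ * ‖T (T v)‖ :=
  calc ‖T v‖ ^ 2 = RCLike.re ⟪v, T (T v)⟫_𝕜 := by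
        rw [← hT, ← inner_self_eq_norm_sq (𝕜 := 𝕜)]
    _ ≤ ‖⟪v, T (T v)⟫_𝕜‖ := RCLike.re_le_norm _
    _ ≤ ‖v‖ * ‖T (T v)‖ := norm_inner_le_norm _ _

theorem norm_apply_div_norm_le (hT : T.IsSymmetric) (v : E) :
    ‖T v‖ / ‖v‖ ≤ ‖T (T v)‖ / ‖T v‖ := by
  rcases eq_or_ne v 0 with rfl | hv
  · simp only [norm_zero, div_zero]; positivity
  rcases eq_or_ne (T v) 0 with hTv | hTv
  · simp [hTv]
  rw [div_le_div_iff₀ (norm_pos_iff.mpr hv) (norm_pos_iff.mpr hTv), ← sq]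
  nlinarith [hT.norm_apply_sq_le v]

end LinearMap.IsSymmetric

theorem LinearMap.norm_apply_inv_norm_smul {𝕜 E F : Type*} [RCLike 𝕜] [NormedAddCommGroup E]
    [NormedSpace ℝ E] [Module 𝕜 E] [IsScalarTower ℝ 𝕜 E] [NormedAddCommGroup F] [NormedSpace ℝ F]
    [Module 𝕜 F] [IsScalarTower ℝ 𝕜 F] (T : E →ₗ[𝕜] F) (v : E) :
    ‖T (‖v‖⁻¹ • v)‖ = ‖T v‖ / ‖v‖ := by
  rw [map_smul_of_tower, norm_smul, norm_inv, norm_norm, inv_mul_eq_div]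

theorem Matrix.toEuclideanLin_pow_succ_apply {𝕜 n : Type*} [RCLike 𝕜] [Fintype n] [DecidableEq n]
    (A : Matrix n n 𝕜) (k : ℕ) (x : EuclideanSpace 𝕜 n) :
    toEuclideanLin (A ^ (k + 1)) x = toEuclideanLin A (toEuclideanLin (A ^ k) x) := by
  simp only [← coe_toEuclideanCLM_eq_toEuclideanLin, pow_succ', map_mul]
  rfl

theorem stmt_6_general (N : ℕ) (G : Matrix (Fin N) (Fin N) ℂ) (hG : G.IsHermitian)
    (φ₀ : EuclideanSpace ℂ (Fin N)) (𝒩 : ℝ)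
    (φ : ℕ → EuclideanSpace ℂ (Fin N))
    (hφ : ∀ s : ℕ, φ s = ‖Matrix.toEuclideanLin (G ^ s) φ₀‖⁻¹ •
      Matrix.toEuclideanLin (G ^ s) φ₀)
    (P : ℕ → ℝ)
    (hP : ∀ s : ℕ, P (s + 1) = ‖Matrix.toEuclideanLin G (φ s)‖ ^ 2 / 𝒩 ^ 2) :
    ∀ s : ℕ, P (s + 1) ≤ P (s + 2) := by
  set T := Matrix.toEuclideanLin G
  set v : ℕ → EuclideanSpace ℂ (Fin N) := fun s => Matrix.toEuclideanLin (G ^ s) φ₀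
  have hv : ∀ s, v (s + 1) = T (v s) := fun s => G.toEuclideanLin_pow_succ_apply s φ₀
  have hP' : ∀ s, P (s + 1) = (‖v (s + 1)‖ / ‖v s‖) ^ 2 / 𝒩 ^ 2 := fun s => by
    rw [hP, hφ, T.norm_apply_inv_norm_smul, hv]
  intro s
  rw [hP', hP', hv (s + 1), hv s]
  gcongr ?_ ^ 2 / _
  exact (Matrix.isSymmetric_toEuclideanLin_iff.mpr hG).norm_apply_div_norm_le (v s)

/-- Lemma 1: the success probability `P(s+1) = ‖G φ(s)‖²/𝒩²` of the iterative
algorithm with Hermitian gradient matrix `G` is nondecreasing in `s`. -/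
theorem stmt_6 (N : ℕ) (G : Matrix (Fin N) (Fin N) ℂ) (hG : G.IsHermitian)
    (φ₀ : EuclideanSpace ℂ (Fin N)) (𝒩 : ℝ) (h𝒩 : 0 < 𝒩)
    (hnz : ∀ s : ℕ, Matrix.toEuclideanLin (G ^ (s + 1)) φ₀ ≠ 0)
    (φ : ℕ → EuclideanSpace ℂ (Fin N))
    (hφ : ∀ s : ℕ, φ s = ‖Matrix.toEuclideanLin (G ^ s) φ₀‖⁻¹ •
      Matrix.toEuclideanLin (G ^ s) φ₀)
    (P : ℕ → ℝ)
    (hP : ∀ s : ℕ, P (s + 1) = ‖Matrix.toEuclideanLin G (φ s)‖ ^ 2 / 𝒩 ^ 2) :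
    ∀ s : ℕ, P (s + 1) ≤ P (s + 2) :=
  stmt_6_general N G hG φ₀ 𝒩 φ hφ P hP
end

section
/- Let N ≥ 1, let E : Fin N → ℝ with E 0 < E i for all i ≠ 0, and let c : Fin N → ℂ with c 0 ≠ 0. Then the function t ↦ (∑ i, ‖c i‖² · (E i) · Real.exp (-2 · (E i) · t)) / (∑ i, ‖c i‖² · Real.exp (-2 · (E i) · t)) tends to E 0 as t → ∞. -/
open Filter

/-- ITE energy convergence: the trial energy tends to the ground energy `E 0`. -/
theorem stmt_11 (n : ℕ) (E : Fin (n + 1) → ℝ)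
    (hE : ∀ i : Fin (n + 1), i ≠ 0 → E 0 < E i)
    (c : Fin (n + 1) → ℂ) (hc : c 0 ≠ 0) :
    Tendsto (fun t : ℝ =>
        (∑ i, ‖c i‖ ^ 2 * E i * Real.exp (-2 * E i * t)) /
          (∑ i, ‖c i‖ ^ 2 * Real.exp (-2 * E i * t)))
      atTop (nhds (E 0)) := by
  have hc0 : (0:ℝ) < ‖c 0‖ ^ 2 := pow_pos (norm_pos_iff.mpr hc) 2
  -- limits of shifted sums
  have hterm : ∀ (a : Fin (n+1) → ℝ), Tendsto
      (fun t : ℝ => ∑ i, a i * Real.exp (-2 * (E i - E 0) * t)) atTop (nhds (a 0)) := by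
    intro a
    have : Tendsto (fun t : ℝ => ∑ i, a i * Real.exp (-2 * (E i - E 0) * t)) atTop
        (nhds (∑ i : Fin (n+1), if i = 0 then a 0 else 0)) := by
      apply tendsto_finset_sum
      intro i _
      by_cases h : i = 0
      · subst h
        simp only [sub_self, mul_zero, zero_mul, Real.exp_zero, mul_one]
        simpa using tendsto_const_nhds
      · simp only [h, if_neg]
        have hlim : Tendsto (fun t : ℝ => Real.exp (-2 * (E i - E 0) * t)) atTop (nhds 0) := by
          apply Real.tendsto_exp_atBot.comp
          have hneg : -2 * (E i - E 0) < 0 := by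
            have := hE i h; nlinarith
          exact (tendsto_const_mul_atBot_of_neg hneg).mpr tendsto_id
        simpa using hlim.const_mul (a i)
    simpa using this
  have hnum := hterm (fun i => ‖c i‖ ^ 2 * E i)
  have hden := hterm (fun i => ‖c i‖ ^ 2)
  have hdiv := hnum.div hden (ne_of_gt hc0)
  have hval : ‖c 0‖ ^ 2 * E 0 / ‖c 0‖ ^ 2 = E 0 := by
    rw [mul_comm, mul_div_assoc, div_self (ne_of_gt hc0), mul_one]
  rw [hval] at hdiv
  refine hdiv.congr (fun t => ?_)
  have hexp : ∀ i : Fin (n+1), Real.exp (-2 * (E i - E 0) * t)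
      = Real.exp (-2 * E i * t) * Real.exp (2 * E 0 * t) := by
    intro i
    rw [← Real.exp_add]; ring_nf
  simp only [Pi.div_apply, hexp]
  rw [eq_comm]
  have h1 : ∑ i, ‖c i‖ ^ 2 * E i * (Real.exp (-2 * E i * t) * Real.exp (2 * E 0 * t))
      = (∑ i, ‖c i‖ ^ 2 * E i * Real.exp (-2 * E i * t)) * Real.exp (2 * E 0 * t) := by
    rw [Finset.sum_mul]; congr 1; ext i; ring
  have h2 : ∑ i, ‖c i‖ ^ 2 * (Real.exp (-2 * E i * t) * Real.exp (2 * E 0 * t))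
      = (∑ i, ‖c i‖ ^ 2 * Real.exp (-2 * E i * t)) * Real.exp (2 * E 0 * t) := by
    rw [Finset.sum_mul]; congr 1; ext i; ring
  rw [h1, h2, mul_div_mul_right _ _ (Real.exp_ne_zero _)]
end

section
/- Let N ≥ 1, let E : Fin N → ℝ with E 0 < E i for all i ≠ 0, and let c : Fin N → ℂ with c 0 ≠ 0. Then the function t ↦ (‖c 0‖² · Real.exp (-2 · (E 0) · t)) / (∑ i, ‖c i‖² · Real.exp (-2 · (E i) · t)) tends to 1 as t → ∞. -/
/-!
Factor the ground-state exponential `exp (-E₀ t)` out of numerator and denominator. What remains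
in the denominator is `∑ wᵢ exp (-(Eᵢ - E₀) t)`, whose terms with `Eᵢ > E₀` decay because of the
spectral gap, so it tends to the ground weight `w₀ ≠ 0` and the ratio tends to `w₀ / w₀ = 1`.
-/

open Filter Topology

namespace Real

theorem tendsto_exp_neg_mul_atTop_nhds_zero {a : ℝ} (ha : 0 < a) :
    Tendsto (fun t => exp (-a * t)) atTop (𝓝 0) :=
  tendsto_exp_atBot.comp <| tendsto_id.const_mul_atTop_of_neg (neg_neg_of_pos ha)

end Real

section GroundStateDominance

variable {ι : Type*} [Fintype ι] (E w : ι → ℝ)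

theorem sum_mul_exp_neg_mul_eq_exp_mul_sum_shifted (i₀ : ι) (t : ℝ) :
    ∑ i, w i * Real.exp (-E i * t) =
      Real.exp (-E i₀ * t) * ∑ i, w i * Real.exp (-(E i - E i₀) * t) := by
  rw [Finset.mul_sum]
  refine Finset.sum_congr rfl fun i _ => ?_
  rw [mul_left_comm, ← Real.exp_add]
  ring_nf

theorem tendsto_sum_mul_exp_shifted_atTop {i₀ : ι} (hE : ∀ i, i ≠ i₀ → E i₀ < E i) :
    Tendsto (fun t => ∑ i, w i * Real.exp (-(E i - E i₀) * t)) atTop (𝓝 (w i₀)) := by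
  classical
  have hterm : ∀ i, Tendsto (fun t => w i * Real.exp (-(E i - E i₀) * t)) atTop
      (𝓝 (if i = i₀ then w i₀ else 0)) := by
    intro i
    by_cases hi : i = i₀
    · subst hi
      simp only [sub_self, neg_zero, zero_mul, Real.exp_zero, mul_one, if_true]
      exact tendsto_const_nhds
    · rw [if_neg hi, ← mul_zero (w i)]
      exact (Real.tendsto_exp_neg_mul_atTop_nhds_zero (sub_pos.2 (hE i hi))).const_mul _
  simpa only [Finset.sum_ite_eq', Finset.mem_univ, if_true] using
    tendsto_finsetSum Finset.univ fun i _ => hterm i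

theorem tendsto_ground_weight_ratio_atTop {i₀ : ι} (hE : ∀ i, i ≠ i₀ → E i₀ < E i)
    (hw : w i₀ ≠ 0) :
    Tendsto (fun t => w i₀ * Real.exp (-E i₀ * t) / ∑ i, w i * Real.exp (-E i * t))
      atTop (𝓝 1) := by
  have hlim := (tendsto_const_nhds (x := w i₀)).div
    (tendsto_sum_mul_exp_shifted_atTop E w hE) hw
  rw [div_self hw] at hlim
  refine hlim.congr fun t => ?_
  rw [Pi.div_apply, sum_mul_exp_neg_mul_eq_exp_mul_sum_shifted E w i₀, mul_comm (w i₀),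
    mul_div_mul_left _ _ (Real.exp_ne_zero _)]

end GroundStateDominance

/-- ITE fidelity convergence: the squared fidelity with the ground state tends to `1`. -/
theorem stmt_12 (n : ℕ) (E : Fin (n + 1) → ℝ)
    (hE : ∀ i : Fin (n + 1), i ≠ 0 → E 0 < E i)
    (c : Fin (n + 1) → ℂ) (hc : c 0 ≠ 0) :
    Tendsto (fun t : ℝ =>
        (‖c 0‖ ^ 2 * Real.exp (-2 * E 0 * t)) /
          (∑ i, ‖c i‖ ^ 2 * Real.exp (-2 * E i * t)))
      atTop (nhds 1) := by
  have hlim := tendsto_ground_weight_ratio_atTop (fun i => 2 * E i) (fun i => ‖c i‖ ^ 2)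
    (fun i hi => by linarith [hE i hi]) (pow_ne_zero 2 (norm_ne_zero_iff.2 hc))
  simpa only [neg_mul] using hlim
end

section
/- Let M, N ≥ 1, let G : Fin M → Matrix (Fin N) (Fin N) ℂ, let y : Fin M → ℝ with y k > 0 for all k, set 𝒩 = ∑ k, y k, and let v : Fin M → ℂ be given by v k = Real.sqrt (y k / 𝒩). Define Λ = ∑ k, (Matrix.stdBasisMatrix k k 1) ⊗ₖ (G k) and, for φ : Fin N → ℂ, let w = Λ.mulVec (fun p => v p.1 * φ p.2). Then ∑ j, ‖∑ k, (starRingEnd ℂ (v k)) · w (k, j)‖² = ‖(∑ k, (y k) • (G k)).mulVec φ‖² / 𝒩². -/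
/-!
The controlled unitary `∑ₖ |k⟩⟨k| ⊗ Gₖ` is block diagonal, so it maps `v ⊗ φ` to the vector
with blocks `vₖ • Gₖ φ`. Projecting the ancilla back onto `v` weights block `k` by
`|vₖ|² = yₖ / 𝒩`, which leaves `(∑ₖ yₖ Gₖ) φ / 𝒩`.
-/

open Kronecker

namespace Matrix

variable {ι m n R : Type*} [Fintype ι] [DecidableEq ι] [Semiring R]

theorem sum_single_kronecker_apply (G : ι → Matrix m n R) (k k' : ι) (i : m) (j : n) :
    (∑ l, single l l (1 : R) ⊗ₖ G l) (k, i) (k', j) = if k = k' then G k i j else 0 := by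
  simp [sum_apply, single_apply, ite_and]

theorem sum_single_kronecker_mulVec_apply [Fintype n] (G : ι → Matrix m n R) (x : ι × n → R)
    (k : ι) (i : m) :
    ((∑ l, single l l (1 : R) ⊗ₖ G l) *ᵥ x) (k, i) = (G k *ᵥ fun j => x (k, j)) i := by
  simp only [mulVec, dotProduct, Fintype.sum_prod_type, sum_single_kronecker_apply, ite_mul,
    zero_mul, Finset.sum_ite_irrel, Finset.sum_const_zero, Finset.sum_ite_eq, Finset.mem_univ,
    if_true]

end Matrix

theorem Complex.conj_ofReal_sqrt_mul_self {r : ℝ} (hr : 0 ≤ r) :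
    starRingEnd ℂ (√r : ℂ) * √r = r := by
  rw [Complex.conj_ofReal, ← Complex.ofReal_mul, Real.mul_self_sqrt hr]

theorem stmt_15_general (M N : ℕ)
    (G : Fin M → Matrix (Fin N) (Fin N) ℂ)
    (y : Fin M → ℝ) (hy : ∀ k, 0 < y k)
    (𝒩 : ℝ) (h𝒩 : 𝒩 = ∑ k, y k)
    (v : Fin M → ℂ) (hv : ∀ k, v k = (Real.sqrt (y k / 𝒩) : ℂ))
    (Λ : Matrix (Fin M × Fin N) (Fin M × Fin N) ℂ)
    (hΛ : Λ = ∑ k, (Matrix.single k k 1) ⊗ₖ (G k))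
    (φ : Fin N → ℂ) (w : Fin M × Fin N → ℂ)
    (hw : w = Λ.mulVec (fun p : Fin M × Fin N => v p.1 * φ p.2)) :
    ∑ j, ‖∑ k, (starRingEnd ℂ (v k)) * w (k, j)‖ ^ 2 =
      ‖(WithLp.equiv 2 (Fin N → ℂ)).symm ((∑ k, (y k) • (G k)).mulVec φ)‖ ^ 2 / 𝒩 ^ 2 := by
  have h𝒩_nonneg : 0 ≤ 𝒩 := h𝒩 ▸ Finset.sum_nonneg fun k _ => (hy k).le
  have hw_apply (k : Fin M) (j : Fin N) : w (k, j) = v k * (G k).mulVec φ j := by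
    rw [hw, hΛ, Matrix.sum_single_kronecker_mulVec_apply]
    exact congrFun (Matrix.mulVec_smul (G k) (v k) φ) j
  have hprojection (j : Fin N) : ∑ k, starRingEnd ℂ (v k) * w (k, j) =
      (𝒩 : ℂ)⁻¹ * (∑ k, y k • G k).mulVec φ j := by
    simp only [hw_apply, ← mul_assoc, hv, Complex.conj_ofReal_sqrt_mul_self
      (div_nonneg (hy _).le h𝒩_nonneg), Matrix.sum_mulVec, Matrix.smul_mulVec, Finset.sum_apply,
      Pi.smul_apply, Complex.real_smul, Finset.mul_sum]
    push_cast
    exact Finset.sum_congr rfl fun k _ => by ring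
  rw [EuclideanSpace.norm_sq_eq, Finset.sum_div]
  simp only [WithLp.equiv_symm_apply, PiLp.toLp_apply]
  refine Finset.sum_congr rfl fun j _ => ?_
  rw [hprojection, norm_mul, mul_pow, norm_inv, Complex.norm_real, Real.norm_of_nonneg h𝒩_nonneg,
    inv_pow, inv_mul_eq_div]

/-- Success probability of the measurement step: after projecting the ancilla back onto
`|y⟩`, the outcome probability equals `‖G φ‖²/𝒩²` with `G = ∑ₖ yₖ Gₖ`. -/
theorem stmt_15 (M N : ℕ) (hM : 1 ≤ M) (hN : 1 ≤ N)
    (G : Fin M → Matrix (Fin N) (Fin N) ℂ)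
    (y : Fin M → ℝ) (hy : ∀ k, 0 < y k)
    (𝒩 : ℝ) (h𝒩 : 𝒩 = ∑ k, y k)
    (v : Fin M → ℂ) (hv : ∀ k, v k = (Real.sqrt (y k / 𝒩) : ℂ))
    (Λ : Matrix (Fin M × Fin N) (Fin M × Fin N) ℂ)
    (hΛ : Λ = ∑ k, (Matrix.single k k 1) ⊗ₖ (G k))
    (φ : Fin N → ℂ) (w : Fin M × Fin N → ℂ)
    (hw : w = Λ.mulVec (fun p : Fin M × Fin N => v p.1 * φ p.2)) :
    ∑ j, ‖∑ k, (starRingEnd ℂ (v k)) * w (k, j)‖ ^ 2 =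
      ‖(WithLp.equiv 2 (Fin N → ℂ)).symm ((∑ k, (y k) • (G k)).mulVec φ)‖ ^ 2 / 𝒩 ^ 2 :=
  stmt_15_general M N G y hy 𝒩 h𝒩 v hv Λ hΛ φ w hw
end
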